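/- Let d ≥ 1, s > 0, and let R_s be the boundary of the box D_s = [0,3s]^{d-1} × [0,2s] in ℝ^d. Then the volume function V_{R_s}(r) = λ_d((R_s)_r) is differentiable at every r > 0 except at r = s. -/

import Mathlib

open Set MeasureTheory

/-- The box `D_s = [0,3s]^{d-1} × [0,2s]` in `ℝ^d` (last coordinate has height `2s`). -/
def boxD (d : ℕ) (s : ℝ) : Set (EuclideanSpace ℝ (Fin d)) :=
  {x | ∀ i : Fin d, x i ∈ Set.Icc 0 (if (i : ℕ) = d - 1 then 2 * s else 3 * s)}

/-- The parallel volume function of `A ⊆ ℝ^d`. -/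
noncomputable def parVol {d : ℕ} (A : Set (EuclideanSpace ℝ (Fin d))) (r : ℝ) : ℝ :=
  (MeasureTheory.volume {x : EuclideanSpace ℝ (Fin d) | Metric.infDist x A < r}).toReal

/-!
For `r > 0` the `r`-neighbourhood of a box `B = ∏ᵢ [0, aᵢ]` is the disjoint union of the
`r`-neighbourhood of `∂B` and the inner box `∏ᵢ [r, aᵢ - r]`. Slicing off one coordinate `t`
(Fubini), the slices of the neighbourhood of `B` are neighbourhoods of a lower-dimensional box
with radius `√(r² - dist(t, [0, a₀])²)`, and integrating a polynomial in that radius over `t`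
gives again a polynomial in `r`. Hence `V_{∂B}(r) = p(r) - ∏ᵢ max(aᵢ - 2r, 0)` for a polynomial
`p`. If `a_{i₀}` is the unique shortest side, the product vanishes for `r > a_{i₀}/2`, is a
polynomial for `r < a_{i₀}/2`, and has a corner at `a_{i₀}/2`: its left derivative there is
`-2 ∏_{i ≠ i₀} (aᵢ - a_{i₀}) ≠ 0`.
-/

noncomputable section

open Metric Polynomial Topology

def clampIcc (b t : ℝ) : ℝ := max 0 (min t b)

def sqDistIcc (b t : ℝ) : ℝ := (t - clampIcc b t) ^ 2

lemma continuous_clampIcc (b : ℝ) : Continuous (clampIcc b) := by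
  unfold clampIcc; fun_prop

lemma continuous_sqDistIcc (b : ℝ) : Continuous (sqDistIcc b) := by
  unfold sqDistIcc; have := continuous_clampIcc b; fun_prop

lemma clampIcc_mem {b : ℝ} (hb : 0 ≤ b) (t : ℝ) : clampIcc b t ∈ Icc 0 b :=
  ⟨le_max_left _ _, max_le hb (min_le_right _ _)⟩

lemma clampIcc_of_mem {b t : ℝ} (ht : t ∈ Icc 0 b) : clampIcc b t = t := by
  simp [clampIcc, min_eq_left ht.2, max_eq_right ht.1]

lemma clampIcc_of_nonpos {b t : ℝ} (ht : t ≤ 0) : clampIcc b t = 0 :=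
  max_eq_left (min_le_of_left_le ht)

lemma clampIcc_of_le {b t : ℝ} (hb : 0 ≤ b) (ht : b ≤ t) : clampIcc b t = b := by
  simp [clampIcc, min_eq_right ht, max_eq_right hb]

lemma abs_sub_clampIcc_le {b t y : ℝ} (hy : y ∈ Icc 0 b) : |t - clampIcc b t| ≤ |t - y| := by
  rcases le_total t 0 with ht | ht
  · rw [clampIcc_of_nonpos ht, sub_zero, abs_of_nonpos ht, abs_of_nonpos (by linarith [hy.1])]
    linarith [hy.1]
  rcases le_total t b with htb | htb
  · simp [clampIcc_of_mem ⟨ht, htb⟩]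
  · rw [clampIcc_of_le (hy.1.trans hy.2) htb, abs_of_nonneg (by linarith),
      abs_of_nonneg (by linarith [hy.2])]
    linarith [hy.2]

lemma sqDistIcc_nonneg (b t : ℝ) : 0 ≤ sqDistIcc b t := sq_nonneg _

lemma sqDistIcc_neg {b u : ℝ} (hu : 0 ≤ u) : sqDistIcc b (-u) = u ^ 2 := by
  simp [sqDistIcc, clampIcc_of_nonpos (neg_nonpos.2 hu)]

lemma sqDistIcc_add {b u : ℝ} (hb : 0 ≤ b) (hu : 0 ≤ u) : sqDistIcc b (u + b) = u ^ 2 := by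
  simp [sqDistIcc, clampIcc_of_le hb (le_add_of_nonneg_left hu)]

lemma sqDistIcc_lt_sq_iff {b r t : ℝ} (hb : 0 ≤ b) (hr : 0 < r) :
    sqDistIcc b t < r ^ 2 ↔ t ∈ Ioo (-r) (b + r) := by
  rw [sqDistIcc, mem_Ioo]
  rcases le_total t 0 with ht | ht
  · rw [clampIcc_of_nonpos ht, sub_zero]
    constructor
    · intro h; constructor <;> nlinarith
    · rintro ⟨h1, -⟩; nlinarith
  rcases le_total t b with htb | htb
  · rw [clampIcc_of_mem ⟨ht, htb⟩]
    constructor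
    · intro h; constructor <;> nlinarith
    · intro; simpa using pow_pos hr 2
  · rw [clampIcc_of_le hb htb]
    constructor
    · intro h; constructor <;> nlinarith
    · rintro ⟨-, h2⟩; nlinarith

lemma integral_sqrt_sq_sub_sq_pow (k : ℕ) {r : ℝ} (hr : 0 ≤ r) :
    ∫ u in (0 : ℝ)..r, √(r ^ 2 - u ^ 2) ^ k
      = (∫ v in (0 : ℝ)..1, √(1 - v ^ 2) ^ k) * r ^ (k + 1) := by
  have hscale : ∀ v : ℝ, √(r ^ 2 - (r * v) ^ 2) ^ k = r ^ k * √(1 - v ^ 2) ^ k := fun v => by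
    rw [show r ^ 2 - (r * v) ^ 2 = r ^ 2 * (1 - v ^ 2) by ring, Real.sqrt_mul (sq_nonneg r),
      Real.sqrt_sq hr, mul_pow]
  have h := intervalIntegral.mul_integral_comp_mul_left (a := 0) (b := 1)
    (f := fun u => √(r ^ 2 - u ^ 2) ^ k) r
  simp only [hscale, intervalIntegral.integral_const_mul, mul_zero, mul_one] at h
  rw [← h]
  ring

lemma exists_polynomial_integral_sqrt_sq_sub_sq (p : ℝ[X]) :
    ∃ q : ℝ[X], ∀ r, 0 ≤ r → ∫ u in (0 : ℝ)..r, p.eval √(r ^ 2 - u ^ 2) = q.eval r := by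
  induction p using Polynomial.induction_on' with
  | add p₁ p₂ h₁ h₂ =>
    obtain ⟨q₁, hq₁⟩ := h₁
    obtain ⟨q₂, hq₂⟩ := h₂
    refine ⟨q₁ + q₂, fun r hr => ?_⟩
    have hint :
        ∀ p : ℝ[X], IntervalIntegrable (fun u => p.eval √(r ^ 2 - u ^ 2)) volume 0 r :=
      fun p => (p.continuous.comp (by fun_prop)).intervalIntegrable _ _
    simp only [eval_add]
    rw [intervalIntegral.integral_add (hint p₁) (hint p₂), hq₁ r hr, hq₂ r hr]
  | monomial k c =>
    refine ⟨monomial (k + 1) (c * ∫ v in (0 : ℝ)..1, √(1 - v ^ 2) ^ k), fun r hr => ?_⟩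
    simp only [eval_monomial, intervalIntegral.integral_const_mul,
      integral_sqrt_sq_sub_sq_pow k hr]
    ring

lemma integral_Ioo_sqrt_sq_sub_sqDistIcc {F : ℝ → ℝ} (hF : Continuous F) {b r : ℝ} (hb : 0 ≤ b)
    (hr : 0 ≤ r) :
    ∫ t in Ioo (-r) (b + r), F √(r ^ 2 - sqDistIcc b t)
      = b * F r + 2 * ∫ u in (0 : ℝ)..r, F √(r ^ 2 - u ^ 2) := by
  set G : ℝ → ℝ := fun t => F √(r ^ 2 - sqDistIcc b t)
  have hG : ∀ u v : ℝ, IntervalIntegrable G volume u v := fun u v =>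
    (hF.comp (continuous_const.sub (continuous_sqDistIcc b)).sqrt).intervalIntegrable u v
  have hleft : ∫ t in (-r)..0, G t = ∫ u in (0 : ℝ)..r, F √(r ^ 2 - u ^ 2) := by
    rw [← neg_zero, ← intervalIntegral.integral_comp_neg, neg_zero]
    refine intervalIntegral.integral_congr fun u hu => ?_
    rw [uIcc_of_le hr] at hu
    simp only [G, sqDistIcc_neg hu.1]
  have hmid : ∫ t in (0 : ℝ)..b, G t = b * F r := by
    rw [intervalIntegral.integral_congr (g := fun _ => F r), intervalIntegral.integral_const,
      sub_zero, smul_eq_mul]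
    intro t ht
    rw [uIcc_of_le hb] at ht
    simp only [G, sqDistIcc, clampIcc_of_mem ht, sub_self, zero_pow two_ne_zero, sub_zero,
      Real.sqrt_sq hr]
  have hright : ∫ t in b..(b + r), G t = ∫ u in (0 : ℝ)..r, F √(r ^ 2 - u ^ 2) := by
    have h := intervalIntegral.integral_comp_add_right G b (a := 0) (b := r)
    rw [zero_add, add_comm r b] at h
    rw [← h]
    refine intervalIntegral.integral_congr fun u hu => ?_
    rw [uIcc_of_le hr] at hu
    simp only [G, sqDistIcc_add hb hu.1]
  rw [← integral_Ioc_eq_integral_Ioo, ← intervalIntegral.integral_of_le (by linarith),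
    ← intervalIntegral.integral_add_adjacent_intervals (hG _ 0) (hG 0 _),
    ← intervalIntegral.integral_add_adjacent_intervals (hG 0 b) (hG b _), hleft, hmid, hright]
  ring

def boxNbhd {ι : Type*} [Fintype ι] (a : ι → ℝ) (r : ℝ) : Set (ι → ℝ) :=
  {u | ∑ j, sqDistIcc (a j) (u j) < r ^ 2}

lemma isOpen_boxNbhd {ι : Type*} [Fintype ι] (a : ι → ℝ) (r : ℝ) : IsOpen (boxNbhd a r) :=
  isOpen_lt (continuous_finsetSum _ fun j _ =>
    (continuous_sqDistIcc (a j)).comp (continuous_apply j)) continuous_const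

lemma boxNbhd_zero {ι : Type*} [Fintype ι] (a : ι → ℝ) : boxNbhd a 0 = ∅ := by
  ext u
  simpa [boxNbhd] using Finset.sum_nonneg fun j _ => sqDistIcc_nonneg (a j) (u j)

/-- For `t` outside `(-r, a 0 + r)` the radius is the junk value `√(negative) = 0`, and
`boxNbhd _ 0 = ∅`, which is the correct (empty) slice. -/
lemma volume_boxNbhd_succ {n : ℕ} (a : Fin (n + 1) → ℝ) (r : ℝ) :
    volume (boxNbhd a r)
      = ∫⁻ t, volume (boxNbhd (Fin.tail a) √(r ^ 2 - sqDistIcc (a 0) t)) := by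
  set T : Set (ℝ × (Fin n → ℝ)) :=
    {p | sqDistIcc (a 0) p.1 + ∑ j, sqDistIcc (a j.succ) (p.2 j) < r ^ 2}
  have hT : MeasurableSet T := by
    refine (isOpen_lt ?_ continuous_const).measurableSet
    exact ((continuous_sqDistIcc _).comp continuous_fst).add (continuous_finsetSum _ fun j _ =>
      (continuous_sqDistIcc _).comp ((continuous_apply j).comp continuous_snd))
  have hpre : MeasurableEquiv.piFinSuccAbove (fun _ => ℝ) 0 ⁻¹' T = boxNbhd a r := by
    ext u
    simp [T, boxNbhd, Fin.sum_univ_succ, Fin.tail]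
  have hslice : ∀ t, Prod.mk t ⁻¹' T = boxNbhd (Fin.tail a) √(r ^ 2 - sqDistIcc (a 0) t) := by
    intro t
    ext y
    have hsum : 0 ≤ ∑ j, sqDistIcc (a j.succ) (y j) :=
      Finset.sum_nonneg fun j _ => sqDistIcc_nonneg _ _
    simp only [T, boxNbhd, mem_preimage, Fin.tail, mem_ofPred_eq]
    rcases le_total 0 (r ^ 2 - sqDistIcc (a 0) t) with h | h
    · rw [Real.sq_sqrt h]; constructor <;> intro <;> linarith
    · rw [Real.sqrt_eq_zero_of_nonpos h]; constructor <;> intro <;> nlinarith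
  rw [← hpre, volume_pi,
    (measurePreserving_piFinSuccAbove (fun _ => volume) 0).measure_preimage hT.nullMeasurableSet,
    Measure.prod_apply hT]
  simp only [hslice, ← volume_pi]

/-- The conjunct `0 ≤ p.eval r` lets the Fubini integral of the slice volumes be computed as a
Bochner integral of `p.eval`. -/
theorem exists_polynomial_volume_boxNbhd {n : ℕ} (a : Fin n → ℝ) (ha : ∀ i, 0 ≤ a i) :
    ∃ p : ℝ[X], ∀ r, 0 < r →
      0 ≤ p.eval r ∧ volume (boxNbhd a r) = ENNReal.ofReal (p.eval r) := by
  induction n with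
  | zero =>
    refine ⟨1, fun r hr => ⟨by simp, ?_⟩⟩
    have : boxNbhd a r = univ := by ext u; simp [boxNbhd, hr]
    simp [this, volume_pi]
  | succ n ih =>
    obtain ⟨p, hp⟩ := ih (Fin.tail a) fun i => ha _
    obtain ⟨q, hq⟩ := exists_polynomial_integral_sqrt_sq_sub_sq p
    refine ⟨C (a 0) * p + 2 * q, fun r hr => ?_⟩
    set ρ : ℝ → ℝ := fun t => √(r ^ 2 - sqDistIcc (a 0) t)
    have hρ : ∀ t, 0 < ρ t ↔ t ∈ Ioo (-r) (a 0 + r) := fun t => by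
      rw [Real.sqrt_pos, sub_pos, sqDistIcc_lt_sq_iff (ha 0) hr]
    have hsupp :
        (fun t => volume (boxNbhd (Fin.tail a) (ρ t))).support ⊆ Ioo (-r) (a 0 + r) := by
      intro t ht
      by_contra hout
      have : ρ t = 0 := le_antisymm (not_lt.1 (mt (hρ t).1 hout)) (Real.sqrt_nonneg _)
      simp [this, boxNbhd_zero] at ht
    have hint : IntegrableOn (fun t => p.eval (ρ t)) (Ioo (-r) (a 0 + r)) :=
      ((p.continuous.comp (continuous_const.sub (continuous_sqDistIcc _)).sqrt).integrableOn_Icc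
        ).mono_set Ioo_subset_Icc_self
    have hnonneg : ∀ t ∈ Ioo (-r) (a 0 + r), 0 ≤ p.eval (ρ t) := fun t ht =>
      (hp _ ((hρ t).2 ht)).1
    have hformula :
        ∫ t in Ioo (-r) (a 0 + r), p.eval (ρ t) = (C (a 0) * p + 2 * q).eval r := by
      rw [integral_Ioo_sqrt_sq_sub_sqDistIcc p.continuous (ha 0) hr.le, hq r hr.le]
      simp
    refine ⟨hformula ▸ setIntegral_nonneg measurableSet_Ioo hnonneg, ?_⟩
    rw [volume_boxNbhd_succ, ← setLIntegral_eq_of_support_subset hsupp,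
      setLIntegral_congr_fun measurableSet_Ioo fun t ht => (hp _ ((hρ t).2 ht)).2, ← hformula,
      ofReal_integral_eq_lintegral_ofReal hint ((ae_restrict_iff' measurableSet_Ioo).2
        (Filter.Eventually.of_forall hnonneg))]

section Box

variable {ι : Type*} {a : ι → ℝ} {r : ℝ}

def box (a : ι → ℝ) : Set (EuclideanSpace ℝ ι) := {x | ∀ i, x i ∈ Icc 0 (a i)}

def innerBox (a : ι → ℝ) (r : ℝ) : Set (EuclideanSpace ℝ ι) :=
  {x | ∀ i, x i ∈ Icc r (a i - r)}

def clampBox (a : ι → ℝ) (x : EuclideanSpace ℝ ι) : EuclideanSpace ℝ ι :=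
  WithLp.toLp 2 fun i => clampIcc (a i) (x i)

lemma clampBox_mem (ha : ∀ i, 0 ≤ a i) (x : EuclideanSpace ℝ ι) : clampBox a x ∈ box a :=
  fun i => clampIcc_mem (ha i) (x i)

lemma innerBox_eq_preimage :
    innerBox a r
      = (MeasurableEquiv.toLp 2 (ι → ℝ)).symm ⁻¹' univ.pi fun i => Icc r (a i - r) := by
  ext x; simp only [innerBox, mem_preimage, mem_univ_pi]; rfl

variable [Fintype ι]

lemma mem_frontier_box {x : EuclideanSpace ℝ ι} :
    x ∈ frontier (box a) ↔ x ∈ box a ∧ ∃ i, x i ∉ Ioo 0 (a i) := by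
  have hbox : box a = (EuclideanSpace.equiv ι ℝ) ⁻¹' univ.pi fun i => Icc 0 (a i) := by
    ext x; simp only [box, mem_preimage, mem_univ_pi]; rfl
  rw [hbox, ← (EuclideanSpace.equiv ι ℝ).coe_toHomeomorph, ← Homeomorph.preimage_frontier,
    frontier, closure_pi_set, interior_pi_set finite_univ]
  simp

lemma zero_mem_frontier_box [Nonempty ι] (ha : ∀ i, 0 ≤ a i) :
    (0 : EuclideanSpace ℝ ι) ∈ frontier (box a) :=
  mem_frontier_box.2 ⟨fun i => ⟨le_rfl, ha i⟩, Classical.arbitrary ι, fun h => lt_irrefl _ h.1⟩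

lemma frontier_box_subset : frontier (box a) ⊆ box a := fun _ hx => (mem_frontier_box.1 hx).1

lemma dist_clampBox_le {x y : EuclideanSpace ℝ ι} (hy : y ∈ box a) :
    dist x (clampBox a x) ≤ dist x y := by
  rw [EuclideanSpace.dist_eq, EuclideanSpace.dist_eq]
  gcongr with i
  rw [Real.dist_eq, Real.dist_eq]
  exact abs_sub_clampIcc_le (hy i)

lemma infDist_box (ha : ∀ i, 0 ≤ a i) (x : EuclideanSpace ℝ ι) :
    infDist x (box a) = dist x (clampBox a x) :=
  le_antisymm (infDist_le_dist_of_mem (clampBox_mem ha x))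
    ((le_infDist ⟨_, clampBox_mem ha x⟩).2 fun _ hy => dist_clampBox_le hy)

lemma infDist_box_lt_iff (ha : ∀ i, 0 ≤ a i) (hr : 0 < r) (x : EuclideanSpace ℝ ι) :
    infDist x (box a) < r ↔ ∑ i, sqDistIcc (a i) (x i) < r ^ 2 := by
  rw [infDist_box ha, EuclideanSpace.dist_eq, Real.sqrt_lt' hr]
  simp only [Real.dist_eq, sq_abs]
  rfl

lemma volume_setOf_infDist_box_lt (ha : ∀ i, 0 ≤ a i) (hr : 0 < r) :
    volume {x : EuclideanSpace ℝ ι | infDist x (box a) < r} = volume (boxNbhd a r) := by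
  have : {x : EuclideanSpace ℝ ι | infDist x (box a) < r}
      = (MeasurableEquiv.toLp 2 (ι → ℝ)).symm ⁻¹' boxNbhd a r := by
    ext x; exact infDist_box_lt_iff ha hr x
  rw [this, (EuclideanSpace.volume_preserving_symm_measurableEquiv_toLp ι).measure_preimage
    (isOpen_boxNbhd a r).measurableSet.nullMeasurableSet]

lemma volume_innerBox : volume (innerBox a r) = ∏ i, ENNReal.ofReal (a i - 2 * r) := by
  rw [innerBox_eq_preimage, (EuclideanSpace.volume_preserving_symm_measurableEquiv_toLp ι
    ).measure_preimage (MeasurableSet.univ_pi fun i => measurableSet_Icc).nullMeasurableSet,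
    volume_pi_pi]
  refine Finset.prod_congr rfl fun i _ => ?_
  rw [Real.volume_Icc]
  ring_nf

lemma disjoint_setOf_infDist_frontier_box_lt_innerBox [Nonempty ι] (ha : ∀ i, 0 ≤ a i) :
    Disjoint {x : EuclideanSpace ℝ ι | infDist x (frontier (box a)) < r} (innerBox a r) := by
  refine disjoint_left.2 fun x hx hxI => ?_
  obtain ⟨y, hy, hxy⟩ := (infDist_lt_iff ⟨0, zero_mem_frontier_box ha⟩).1 hx
  obtain ⟨i, hi⟩ := (mem_frontier_box.1 hy).2
  have hfar : r ≤ |x i - y i| := by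
    rw [mem_Ioo, not_and_or, not_lt, not_lt] at hi
    rcases hi with hi | hi
    · exact (le_abs_self _).trans' (by linarith [(hxI i).1])
    · exact (neg_le_abs _).trans' (by linarith [(hxI i).2])
  exact hxy.not_ge (hfar.trans (PiLp.dist_apply_le x y i))

lemma clampBox_mem_frontier (ha : ∀ i, 0 ≤ a i) {x : EuclideanSpace ℝ ι} (hx : x ∉ box a) :
    clampBox a x ∈ frontier (box a) := by
  obtain ⟨i, hi⟩ : ∃ i, x i ∉ Icc 0 (a i) := by simpa [box] using hx
  refine mem_frontier_box.2 ⟨clampBox_mem ha x, i, ?_⟩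
  rw [mem_Icc, not_and_or, not_le, not_le] at hi
  change clampIcc (a i) (x i) ∉ Ioo 0 (a i)
  rcases hi with hi | hi
  · simp [clampIcc_of_nonpos hi.le]
  · simp [clampIcc_of_le (ha i) hi.le]

lemma exists_mem_frontier_box_dist_lt (ha : ∀ i, 0 ≤ a i) {x : EuclideanSpace ℝ ι}
    (hxB : x ∈ box a) (hxI : x ∉ innerBox a r) : ∃ z ∈ frontier (box a), dist x z < r := by
  classical
  obtain ⟨i, c, hcB, hcF, hxc⟩ :
      ∃ i c, c ∈ Icc 0 (a i) ∧ c ∉ Ioo 0 (a i) ∧ |x i - c| < r := by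
    obtain ⟨i, hi⟩ : ∃ i, ¬(r ≤ x i ∧ x i ≤ a i - r) := by simpa [innerBox] using hxI
    rcases lt_or_ge (x i) r with h | h
    · refine ⟨i, 0, ⟨le_rfl, ha i⟩, fun h => h.1.false, ?_⟩
      rwa [sub_zero, abs_of_nonneg (hxB i).1]
    · have : a i - r < x i := not_le.1 fun h' => hi ⟨h, h'⟩
      refine ⟨i, a i, ⟨ha i, le_rfl⟩, fun h => h.2.false, ?_⟩
      rw [abs_of_nonpos (by linarith [(hxB i).2])]
      linarith
  set z := x + EuclideanSpace.single i (c - x i)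
  have hzi : z i = c := by simp [z]
  have hzB : z ∈ box a := fun j => by
    rcases eq_or_ne j i with rfl | hj
    · rwa [hzi]
    · simpa [z, hj] using hxB j
  refine ⟨z, mem_frontier_box.2 ⟨hzB, i, hzi ▸ hcF⟩, ?_⟩
  rwa [dist_self_add_right, PiLp.norm_single, Real.norm_eq_abs, abs_sub_comm]

lemma setOf_infDist_box_lt [Nonempty ι] (ha : ∀ i, 0 ≤ a i) (hr : 0 < r) :
    {x : EuclideanSpace ℝ ι | infDist x (box a) < r}
      = {x | infDist x (frontier (box a)) < r} ∪ innerBox a r := by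
  ext x
  simp only [mem_union, mem_ofPred_eq]
  constructor
  · intro hx
    by_cases hxI : x ∈ innerBox a r
    · exact Or.inr hxI
    by_cases hxB : x ∈ box a
    · obtain ⟨z, hzF, hxz⟩ := exists_mem_frontier_box_dist_lt ha hxB hxI
      exact Or.inl ((infDist_le_dist_of_mem hzF).trans_lt hxz)
    · exact Or.inl ((infDist_le_dist_of_mem (clampBox_mem_frontier ha hxB)).trans_lt
        ((infDist_box ha x).symm.trans_lt hx))
  · rintro (hx | hx)
    · exact (infDist_le_infDist_of_subset frontier_box_subset
        ⟨0, zero_mem_frontier_box ha⟩).trans_lt hx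
    · rwa [infDist_zero_of_mem fun i => ⟨hr.le.trans (hx i).1, (hx i).2.trans (by linarith)⟩]

lemma measurableSet_innerBox : MeasurableSet (innerBox a r) := by
  rw [innerBox_eq_preimage]
  exact (MeasurableEquiv.toLp 2 (ι → ℝ)).symm.measurable
    (MeasurableSet.univ_pi fun i => measurableSet_Icc)

end Box

theorem exists_polynomial_parVol_frontier_box {n : ℕ} [Nonempty (Fin n)] {a : Fin n → ℝ}
    (ha : ∀ i, 0 ≤ a i) :
    ∃ p : ℝ[X], ∀ r, 0 < r →
      parVol (frontier (box a)) r = p.eval r - ∏ i, max (a i - 2 * r) 0 := by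
  obtain ⟨p, hp⟩ := exists_polynomial_volume_boxNbhd a ha
  refine ⟨p, fun r hr => ?_⟩
  obtain ⟨hp0, hvol⟩ := hp r hr
  have hunion := measure_union (μ := volume)
    (disjoint_setOf_infDist_frontier_box_lt_innerBox ha) (measurableSet_innerBox (r := r))
  rw [← setOf_infDist_box_lt ha hr, volume_setOf_infDist_box_lt ha hr, hvol] at hunion
  have hI : volume (innerBox a r) ≠ ⊤ := by
    rw [volume_innerBox]
    exact ENNReal.prod_ne_top fun i _ => ENNReal.ofReal_ne_top
  have hF : volume {x : EuclideanSpace ℝ (Fin n) | infDist x (frontier (box a)) < r} ≠ ⊤ :=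
    fun h => by simp [h] at hunion
  have hreal := congrArg ENNReal.toReal hunion
  rw [ENNReal.toReal_ofReal hp0, ENNReal.toReal_add hF hI, volume_innerBox, ENNReal.toReal_prod]
    at hreal
  simp only [ENNReal.toReal_ofReal'] at hreal
  rw [parVol]
  linarith

lemma differentiableAt_prod_max_sub_of_lt {ι : Type*} (s : Finset ι) (a : ι → ℝ) {r : ℝ}
    (h : ∀ i ∈ s, 2 * r < a i) :
    DifferentiableAt ℝ (fun t => ∏ i ∈ s, max (a i - 2 * t) 0) r := by
  refine DifferentiableAt.fun_finsetProd fun i hi => ?_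
  have : (fun t => max (a i - 2 * t) 0) =ᶠ[𝓝 r] fun t => a i - 2 * t :=
    Filter.eventually_of_mem (Iio_mem_nhds (show r < a i / 2 by linarith [h i hi]))
      fun t ht => max_eq_left (by linarith [show t < a i / 2 from ht])
  exact this.differentiableAt_iff.2 (by fun_prop)

lemma not_differentiableAt_max_sub_mul {h : ℝ → ℝ} {c : ℝ} (hd : DifferentiableAt ℝ h c)
    (hc : h c ≠ 0) : ¬DifferentiableAt ℝ (fun t => max (c - t) 0 * h t) c := by
  intro hf
  have hright : HasDerivWithinAt (fun t => max (c - t) 0 * h t) 0 (Ici c) c :=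
    (hasDerivWithinAt_const c _ 0).congr_of_mem
      (fun t ht => by rw [max_eq_right (by linarith [mem_Ici.1 ht]), zero_mul]) self_mem_Ici
  have hleft : HasDerivWithinAt (fun t => max (c - t) 0 * h t) (-h c) (Iic c) c := by
    have := ((hasDerivAt_id c).const_sub c).mul hd.hasDerivAt
    refine (this.hasDerivWithinAt.congr_of_mem (fun t ht => ?_) self_mem_Iic).congr_deriv ?_
    · rw [max_eq_left (by linarith [mem_Iic.1 ht])]; rfl
    · simp
  have h0 := (uniqueDiffWithinAt_Ici c).eq_deriv _ hright hf.hasDerivAt.hasDerivWithinAt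
  have h1 := (uniqueDiffWithinAt_Iic c).eq_deriv _ hleft hf.hasDerivAt.hasDerivWithinAt
  exact hc (by linarith)

section ShortestSide

variable {n : ℕ} {a : Fin n → ℝ} {i₀ : Fin n}

theorem differentiableAt_parVol_frontier_box (ha₀ : 0 ≤ a i₀) (hmin : ∀ i, a i₀ ≤ a i)
    {r : ℝ} (hr : 0 < r) (hne : r ≠ a i₀ / 2) :
    DifferentiableAt ℝ (parVol (frontier (box a))) r := by
  have : Nonempty (Fin n) := ⟨i₀⟩
  obtain ⟨p, hp⟩ := exists_polynomial_parVol_frontier_box fun i => ha₀.trans (hmin i)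
  have heq :
      parVol (frontier (box a)) =ᶠ[𝓝 r] fun t => p.eval t - ∏ i, max (a i - 2 * t) 0 :=
    Filter.eventually_of_mem (Ioi_mem_nhds hr) hp
  rw [heq.differentiableAt_iff]
  refine (p.differentiable r).sub ?_
  rcases hne.lt_or_gt with hlt | hgt
  · exact differentiableAt_prod_max_sub_of_lt _ a fun i _ => by linarith [hmin i]
  · have hzero : (fun t => ∏ i, max (a i - 2 * t) 0) =ᶠ[𝓝 r] fun _ => 0 :=
      Filter.eventually_of_mem (Ioi_mem_nhds hgt) fun t ht =>
        Finset.prod_eq_zero (Finset.mem_univ i₀) (max_eq_right (by linarith [mem_Ioi.1 ht]))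
    exact hzero.differentiableAt_iff.2 (differentiableAt_const 0)

theorem not_differentiableAt_parVol_frontier_box (ha₀ : 0 < a i₀)
    (hmin : ∀ i, i ≠ i₀ → a i₀ < a i) :
    ¬DifferentiableAt ℝ (parVol (frontier (box a))) (a i₀ / 2) := by
  have ha : ∀ i, 0 ≤ a i := fun i => by
    rcases eq_or_ne i i₀ with rfl | hi
    · exact ha₀.le
    · linarith [hmin i hi]
  have : Nonempty (Fin n) := ⟨i₀⟩
  obtain ⟨p, hp⟩ := exists_polynomial_parVol_frontier_box ha
  set h : ℝ → ℝ := fun t => 2 * ∏ i ∈ Finset.univ.erase i₀, max (a i - 2 * t) 0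
  have hsplit : ∀ t, ∏ i, max (a i - 2 * t) 0 = max (a i₀ / 2 - t) 0 * h t := fun t => by
    rw [← Finset.mul_prod_erase _ _ (Finset.mem_univ i₀), mul_left_comm, ← mul_assoc,
      mul_max_of_nonneg _ _ zero_le_two]
    ring_nf
  have hh : DifferentiableAt ℝ h (a i₀ / 2) :=
    (differentiableAt_prod_max_sub_of_lt _ a fun i hi => by
      linarith [hmin i (Finset.ne_of_mem_erase hi)]).const_mul 2
  have hh0 : h (a i₀ / 2) ≠ 0 := by
    refine mul_ne_zero two_ne_zero (Finset.prod_pos fun i hi => ?_).ne'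
    exact lt_max_of_lt_left (by linarith [hmin i (Finset.ne_of_mem_erase hi)])
  intro hdiff
  refine not_differentiableAt_max_sub_mul hh hh0
    (((p.differentiable _).sub hdiff).congr_of_eventuallyEq ?_)
  filter_upwards [Ioi_mem_nhds (show 0 < a i₀ / 2 by linarith)] with t ht
  rw [Pi.sub_apply, hp t ht, hsplit]
  ring

end ShortestSide

end

/-- For `d ≥ 1` and `s > 0`, the parallel volume function of the boundary `R_s = ∂D_s`
of the box `D_s = [0,3s]^{d-1} × [0,2s]` is differentiable at every `r > 0` except `r = s`,
and is not differentiable at `s`. -/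
theorem stmt14 (d : ℕ) (hd : 1 ≤ d) (s : ℝ) (hs : 0 < s) :
    (∀ r : ℝ, 0 < r → r ≠ s → DifferentiableAt ℝ (parVol (frontier (boxD d s))) r) ∧
      ¬ DifferentiableAt ℝ (parVol (frontier (boxD d s))) s := by
  set a : Fin d → ℝ := fun i => if (i : ℕ) = d - 1 then 2 * s else 3 * s
  set i₀ : Fin d := ⟨d - 1, by omega⟩
  have hbox : boxD d s = box a := rfl
  have hai₀ : a i₀ = 2 * s := by simp [a, i₀]
  have hmin : ∀ i, i ≠ i₀ → a i₀ < a i := fun i hi => by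
    have : (i : ℕ) ≠ d - 1 := fun h => hi (Fin.ext h)
    simp only [a, if_neg this, hai₀]
    linarith
  have hs' : s = a i₀ / 2 := by rw [hai₀]; ring
  rw [hbox, hs']
  have hmin' : ∀ i, a i₀ ≤ a i := fun i =>
    (eq_or_ne i i₀).elim (fun h => h ▸ le_rfl) fun h => (hmin i h).le
  exact ⟨fun r hr hne => differentiableAt_parVol_frontier_box (by linarith) hmin' hr hne,
    not_differentiableAt_parVol_frontier_box (by linarith) hmin⟩
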